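/- Let S : [0,∞) → ℝ be continuous and let π = {0 = t_0 < t_1 < …} be a partition. Let f : ℝ → ℝ be absolutely continuous with right-continuous derivative f′ of locally bounded variation. Then for every t ≥ 0: f(S(t)) − f(S(0)) = ∑_{t_j ∈ π} f′(S(t_j∧t))(S(t_{j+1}∧t) − S(t_j∧t)) + ∫_ℝ L_t^π(u) df′(u), where L_t^π(u) = ∑_{t_j ∈ π} 1_{⦇S(t_j∧t), S(t_{j+1}∧t)⦈}(u)|S(t_{j+1}∧t) − u| is the discrete local time and the last integral is a Lebesgue–Stieltjes integral against df′. -/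

import Mathlib

open Set MeasureTheory Classical

/-- `⦇a,b⦈` : the half-open interval `(a,b]` if `a ≤ b`, and `(b,a]` otherwise. -/
noncomputable def hook (a b : ℝ) : Set ℝ := if a ≤ b then Set.Ioc a b else Set.Ioc b a

/-- The discrete local time of a path `S` along the partition `τ` at time `t` and level `u`. -/
noncomputable def discreteLocalTime (S : ℝ → ℝ) (τ : ℕ → ℝ) (t u : ℝ) : ℝ :=
  ∑' j : ℕ, if u ∈ hook (S (min (τ j) t)) (S (min (τ (j + 1)) t))
            then |S (min (τ (j + 1)) t) - u| else 0

/-!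
Each increment is a first-order Taylor expansion with exact Stieltjes remainder: for a Stieltjes
function `g`, Tonelli on the triangle `{a < u ≤ y ≤ b}` gives
`∫_a^b (g y - g a) dy = ∫_{(a,b]} (b - u) dg(u)`, and the case `b < a` reduces to this one.
Applied to `f' = g - h` this yields `f b - f a = f' a (b - a) + ∫_{⦇a,b⦈} |b - u| df'(u)`.
Since `τ j ≥ t` eventually, the stopped path `S (τ j ∧ t)` is eventually constant, so every
series is a finite sum and the identity is the sum of the increments.
-/

lemma measurableSet_hook (a b : ℝ) : MeasurableSet (hook a b) := by
  unfold hook; split_ifs <;> exact measurableSet_Ioc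

lemma hook_self (a : ℝ) : hook a a = ∅ := by
  simp [hook]

lemma Continuous.integrableOn_hook {μ : Measure ℝ} [IsLocallyFiniteMeasure μ] {φ : ℝ → ℝ}
    (hφ : Continuous φ) (a b : ℝ) : IntegrableOn φ (hook a b) μ := by
  unfold hook; split_ifs <;> exact hφ.integrableOn_Ioc

lemma lintegral_measure_Ioc_eq_lintegral_measure_Icc (μ ν : Measure ℝ) [SFinite μ] [SFinite ν]
    (a b : ℝ) : ∫⁻ y in Ioc a b, μ (Ioc a y) ∂ν = ∫⁻ u in Ioc a b, ν (Icc u b) ∂μ := by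
  have hR : MeasurableSet {p : ℝ × ℝ | p.2 ≤ p.1} := measurableSet_le measurable_snd measurable_fst
  have h₁ := Measure.prod_apply (μ := ν.restrict (Ioc a b)) (ν := μ.restrict (Ioc a b)) hR
  have h₂ := Measure.prod_apply_symm (μ := ν.restrict (Ioc a b)) (ν := μ.restrict (Ioc a b)) hR
  rw [h₁] at h₂
  convert h₂ using 1
  · refine setLIntegral_congr_fun measurableSet_Ioc fun y hy => ?_
    rw [Measure.restrict_apply' measurableSet_Ioc]
    congr 1; ext u; simp only [mem_Ioc, mem_inter_iff, mem_preimage, mem_ofPred_eq]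
    constructor
    · rintro ⟨h1, h2⟩; exact ⟨h2, h1, h2.trans hy.2⟩
    · rintro ⟨h1, h2, -⟩; exact ⟨h2, h1⟩
  · refine setLIntegral_congr_fun measurableSet_Ioc fun u hu => ?_
    rw [Measure.restrict_apply' measurableSet_Ioc]
    congr 1; ext y; simp only [mem_Icc, mem_Ioc, mem_inter_iff, mem_preimage, mem_ofPred_eq]
    constructor
    · rintro ⟨h1, h2⟩; exact ⟨h1, hu.1.trans_le h1, h2⟩
    · rintro ⟨h1, -, h2⟩; exact ⟨h1, h2⟩

theorem StieltjesFunction.setIntegral_Ioc_sub_eq_setIntegral_measure (g : StieltjesFunction ℝ)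
    (a b : ℝ) :
    ∫ y in Ioc a b, (g y - g a) = ∫ u in Ioc a b, (b - u) ∂g.measure := by
  have hg : ∀ y ∈ Ioc a b, 0 ≤ g y - g a := fun y hy => sub_nonneg.2 (g.mono hy.1.le)
  have hb : ∀ u ∈ Ioc a b, 0 ≤ b - u := fun u hu => sub_nonneg.2 hu.2
  rw [integral_eq_lintegral_of_nonneg_ae ((ae_restrict_iff' measurableSet_Ioc).2 (ae_of_all _ hg))
      ((g.mono.measurable.sub measurable_const).aestronglyMeasurable),
    integral_eq_lintegral_of_nonneg_ae ((ae_restrict_iff' measurableSet_Ioc).2 (ae_of_all _ hb))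
      ((measurable_const.sub measurable_id).aestronglyMeasurable)]
  congr 1
  simp_rw [← g.measure_Ioc, ← Real.volume_Icc]
  exact lintegral_measure_Ioc_eq_lintegral_measure_Icc g.measure volume a b

theorem StieltjesFunction.intervalIntegral_sub_eq_setIntegral_hook (g : StieltjesFunction ℝ)
    (a b : ℝ) :
    ∫ y in a..b, (g y - g a) = ∫ u in hook a b, |b - u| ∂g.measure := by
  rcases le_or_gt a b with hab | hba
  · rw [intervalIntegral.integral_of_le hab, g.setIntegral_Ioc_sub_eq_setIntegral_measure, hook,
      if_pos hab]
    exact setIntegral_congr_fun measurableSet_Ioc fun u hu =>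
      (abs_of_nonneg (by linarith [hu.2])).symm
  · have hI : IntervalIntegrable (fun y => g y - g b) volume a b :=
      g.mono.intervalIntegrable.sub intervalIntegrable_const
    have hμ : IntegrableOn (fun u => a - u) (Ioc b a) g.measure :=
      (continuous_const.sub continuous_id).integrableOn_Ioc
    have hsplit :
        ∫ y in a..b, (g y - g a) = (b - a) * (g b - g a) - ∫ y in b..a, (g y - g b) := by
      have : ∫ y in a..b, (g y - g a) = ∫ y in a..b, ((g y - g b) + (g b - g a)) := by
        congr 1; ext y; ring
      rw [this, intervalIntegral.integral_add hI intervalIntegrable_const,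
        intervalIntegral.integral_const, intervalIntegral.integral_symm b a, smul_eq_mul]
      ring
    rw [hsplit, intervalIntegral.integral_of_le hba.le,
      g.setIntegral_Ioc_sub_eq_setIntegral_measure, hook, if_neg hba.not_ge]
    have hμI : g.measure.real (Ioc b a) = g a - g b := by
      rw [measureReal_def, g.measure_Ioc, ENNReal.toReal_ofReal (by linarith [g.mono hba.le])]
    calc (b - a) * (g b - g a) - ∫ u in Ioc b a, (a - u) ∂g.measure
        = ∫ u in Ioc b a, ((a - b) - (a - u)) ∂g.measure := by
          rw [integral_sub (integrableOn_const (C := a - b) measure_Ioc_lt_top.ne) hμ,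
            setIntegral_const, hμI, smul_eq_mul]
          ring
      _ = ∫ u in Ioc b a, |b - u| ∂g.measure :=
          setIntegral_congr_fun measurableSet_Ioc fun u hu => by
            rw [abs_of_nonpos (by linarith [hu.1])]; ring

theorem sub_eq_mul_add_setIntegral_hook (g h : StieltjesFunction ℝ) (f' f : ℝ → ℝ)
    (hf' : ∀ x, f' x = g x - h x)
    (hf : ∀ x, f x = if 0 ≤ x then ∫ y in Ioc 0 x, f' y else -∫ y in Ioc x 0, f' y) (a b : ℝ) :
    f b - f a = f' a * (b - a)
      + ((∫ u in hook a b, |b - u| ∂g.measure) - ∫ u in hook a b, |b - u| ∂h.measure) := by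
  have hf'_int : ∀ p q, IntervalIntegrable f' volume p q := fun p q => by
    simpa only [← hf'] using g.mono.intervalIntegrable.sub h.mono.intervalIntegrable
  have hf_prim : ∀ x, f x = ∫ y in 0..x, f' y := fun x => by
    rw [hf]; split_ifs with hx
    · rw [intervalIntegral.integral_of_le hx]
    · rw [intervalIntegral.integral_of_ge (not_le.1 hx).le]
  have hg := g.mono.intervalIntegrable (μ := volume) (a := a) (b := b)
  have hh := h.mono.intervalIntegrable (μ := volume) (a := a) (b := b)
  calc f b - f a = ∫ y in a..b, f' y := by
        rw [hf_prim, hf_prim,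
          intervalIntegral.integral_interval_sub_left (hf'_int 0 b) (hf'_int 0 a)]
    _ = ∫ y in a..b, ((g y - g a) - (h y - h a) + f' a) :=
        intervalIntegral.integral_congr fun y _ => by simp only [hf']; ring
    _ = _ := by
        rw [intervalIntegral.integral_add ((hg.sub intervalIntegrable_const).sub
            (hh.sub intervalIntegrable_const)) intervalIntegrable_const,
          intervalIntegral.integral_sub (hg.sub intervalIntegrable_const)
            (hh.sub intervalIntegrable_const),
          g.intervalIntegral_sub_eq_setIntegral_hook, h.intervalIntegral_sub_eq_setIntegral_hook,
          intervalIntegral.integral_const, smul_eq_mul]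
        ring

/-- `discreteLocalTime S τ t` is `seqLocalTime` of the stopped path `j ↦ S (τ j ∧ t)`. -/
noncomputable def seqLocalTime (x : ℕ → ℝ) (u : ℝ) : ℝ :=
  ∑' j : ℕ, if u ∈ hook (x j) (x (j + 1)) then |x (j + 1) - u| else 0

section EventuallyConstant

variable {x : ℕ → ℝ} {N : ℕ}

lemma tsum_eq_sum_range_of_eventually_const (hx : ∀ j, N ≤ j → x j = x N) {F : ℝ → ℝ → ℝ}
    (hF : ∀ c, F c c = 0) : ∑' j, F (x j) (x (j + 1)) = ∑ j ∈ Finset.range N, F (x j) (x (j + 1)) :=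
  tsum_eq_sum fun j hj => by
    have hNj : N ≤ j := not_lt.1 (by simpa using hj)
    rw [hx j hNj, hx (j + 1) (hNj.trans j.le_succ), hF]

lemma integral_seqLocalTime_of_eventually_const (hx : ∀ j, N ≤ j → x j = x N) (μ : Measure ℝ)
    [IsLocallyFiniteMeasure μ] :
    ∫ u, seqLocalTime x u ∂μ
      = ∑ j ∈ Finset.range N, ∫ u in hook (x j) (x (j + 1)), |x (j + 1) - u| ∂μ := by
  have hterm : ∀ j u, (if u ∈ hook (x j) (x (j + 1)) then |x (j + 1) - u| else 0)
      = (hook (x j) (x (j + 1))).indicator (fun u => |x (j + 1) - u|) u :=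
    fun j u => by rw [indicator_apply]
  have hsum : ∀ u, seqLocalTime x u
      = ∑ j ∈ Finset.range N, (hook (x j) (x (j + 1))).indicator (fun u => |x (j + 1) - u|) u :=
    fun u => by
      simp_rw [seqLocalTime, hterm]
      exact tsum_eq_sum_range_of_eventually_const
        (F := fun c d => (hook c d).indicator (|d - ·|) u) hx fun c => by simp [hook_self]
  simp_rw [hsum]
  rw [integral_finsetSum _ fun j _ =>
    (Continuous.integrableOn_hook (φ := fun u => |x (j + 1) - u|) (by fun_prop) _ _)
      |>.integrable_indicator (measurableSet_hook _ _)]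
  simp_rw [integral_indicator (measurableSet_hook _ _)]

theorem sub_eq_tsum_add_integral_seqLocalTime_of_eventually_const (hx : ∀ j, N ≤ j → x j = x N)
    (g h : StieltjesFunction ℝ) (f' f : ℝ → ℝ) (hf' : ∀ x, f' x = g x - h x)
    (hf : ∀ x, f x = if 0 ≤ x then ∫ y in Ioc 0 x, f' y else -∫ y in Ioc x 0, f' y) :
    f (x N) - f (x 0) = (∑' j, f' (x j) * (x (j + 1) - x j))
      + ((∫ u, seqLocalTime x u ∂g.measure) - ∫ u, seqLocalTime x u ∂h.measure) := by
  rw [tsum_eq_sum_range_of_eventually_const hx (F := fun c d => f' c * (d - c)) (by simp),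
    integral_seqLocalTime_of_eventually_const hx, integral_seqLocalTime_of_eventually_const hx,
    ← Finset.sum_range_sub (fun j => f (x j)), ← Finset.sum_sub_distrib, ← Finset.sum_add_distrib]
  exact Finset.sum_congr rfl fun j _ =>
    sub_eq_mul_add_setIntegral_hook g h f' f hf' hf (x j) (x (j + 1))

end EventuallyConstant

theorem discrete_ito_tanaka_general
    (S : ℝ → ℝ)
    (τ : ℕ → ℝ) (hτ0 : τ 0 = 0)
    (hτtop : Filter.Tendsto τ Filter.atTop Filter.atTop)
    (g h : StieltjesFunction ℝ) (f' f : ℝ → ℝ)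
    (hf' : ∀ x, f' x = g x - h x)
    (hf : ∀ x, f x = if 0 ≤ x then ∫ y in Set.Ioc 0 x, f' y else -∫ y in Set.Ioc x 0, f' y)
    (t : ℝ) (ht : 0 ≤ t) :
    f (S t) - f (S 0)
      = (∑' j : ℕ, f' (S (min (τ j) t)) * (S (min (τ (j + 1)) t) - S (min (τ j) t)))
        + ((∫ u, discreteLocalTime S τ t u ∂g.measure)
            - ∫ u, discreteLocalTime S τ t u ∂h.measure) := by
  obtain ⟨N, hN⟩ := Filter.eventually_atTop.mp (hτtop.eventually_ge_atTop t)
  have hstopped : ∀ j, N ≤ j → S (min (τ j) t) = S (min (τ N) t) := fun j hj => by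
    rw [min_eq_right (hN j hj), min_eq_right (hN N le_rfl)]
  have key :=
    sub_eq_tsum_add_integral_seqLocalTime_of_eventually_const hstopped g h f' f hf' hf
  rw [min_eq_right (hN N le_rfl), hτ0, min_eq_left ht] at key
  exact key

/-- Exact discrete Itô–Tanaka identity along an infinite partition: for `f` absolutely
continuous with right-continuous derivative `f' = g - h` of locally bounded variation
(`g, h` Stieltjes functions, so that `df' = dg - dh`),
`f(S(t)) - f(S(0)) = ∑_j f'(S(t_j∧t))(S(t_{j+1}∧t) - S(t_j∧t)) + ∫ L_t^π(u) df'(u)`. -/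
theorem discrete_ito_tanaka
    (S : ℝ → ℝ) (hS : Continuous S)
    (τ : ℕ → ℝ) (hτ0 : τ 0 = 0) (hτmono : StrictMono τ)
    (hτtop : Filter.Tendsto τ Filter.atTop Filter.atTop)
    (g h : StieltjesFunction ℝ) (f' f : ℝ → ℝ)
    (hf' : ∀ x, f' x = g x - h x)
    (hf : ∀ x, f x = if 0 ≤ x then ∫ y in Set.Ioc 0 x, f' y else -∫ y in Set.Ioc x 0, f' y)
    (t : ℝ) (ht : 0 ≤ t) :
    f (S t) - f (S 0)
      = (∑' j : ℕ, f' (S (min (τ j) t)) * (S (min (τ (j + 1)) t) - S (min (τ j) t)))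
        + ((∫ u, discreteLocalTime S τ t u ∂g.measure)
            - ∫ u, discreteLocalTime S τ t u ∂h.measure) :=
  discrete_ito_tanaka_general S τ hτ0 hτtop g h f' f hf' hf t ht
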